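/- arXiv:1611.08933 — 7 statements merged into one kernel-verified Lean document; each statement's English description precedes it below -/
import Mathlib

section
/- Let G(u,s,t,m) = { s^{3/2}( m((2√s+1)√t+2) − 4((2√s+1)√t+1) ) + u²( 2(s+2√s+3)(√s·√t+1) − m(s^{3/2}√t − 2s(√t−1) − 2√s + 2) ) − u·√s·[ s(6√t+4) + √s(10−4√t) − 2(√t+1) + m(2s^{3/2}√t + 2√s(√t−1) + 2s + √t + 2) ] + u³( m√s√t + 2m + 2√s + 2 ) } / ( m(u−1)³(u−s)²(u−st) ). Then for all real s > 0 and t > 0, the partial derivative ∂G/∂u evaluated at u = 0 with m = 6 equals ( (4s + √s + 3)t + (2√s + 1)√t + 4 ) / (3 s^{5/2} t²); that is, H⁽⁶⁾_{Δ_k}(s,t) equals this expression. -/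
open Real

/-- The two-variable generating function of the local curvature functions of the
perturbed Laplacian on a Connes–Landi deformation. -/
noncomputable def G (u s t m : ℝ) : ℝ :=
  (Real.sqrt s ^ 3 * (m * ((2 * Real.sqrt s + 1) * Real.sqrt t + 2)
      - 4 * ((2 * Real.sqrt s + 1) * Real.sqrt t + 1))
    + u ^ 2 * (2 * (s + 2 * Real.sqrt s + 3) * (Real.sqrt s * Real.sqrt t + 1)
      - m * (Real.sqrt s ^ 3 * Real.sqrt t - 2 * s * (Real.sqrt t - 1)
        - 2 * Real.sqrt s + 2))
    - u * Real.sqrt s * (s * (6 * Real.sqrt t + 4)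
      + Real.sqrt s * (10 - 4 * Real.sqrt t) - 2 * (Real.sqrt t + 1)
      + m * (2 * Real.sqrt s ^ 3 * Real.sqrt t + 2 * Real.sqrt s * (Real.sqrt t - 1)
        + 2 * s + Real.sqrt t + 2))
    + u ^ 3 * (m * Real.sqrt s * Real.sqrt t + 2 * m + 2 * Real.sqrt s + 2)) /
    (m * (u - 1) ^ 3 * (u - s) ^ 2 * (u - s * t))

/-- In dimension six, the two-variable local curvature function of the perturbed
Laplacian is `H⁽⁶⁾_{Δ_k}(s,t) = ∂G/∂u (0,s,t,6)
  = ((4s + √s + 3)t + (2√s + 1)√t + 4)/(3 s^{5/2} t²)`. -/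
theorem stmt3 (s t : ℝ) (hs : 0 < s) (ht : 0 < t) :
    deriv (fun u : ℝ => G u s t 6) 0 =
      ((4 * s + Real.sqrt s + 3) * t + (2 * Real.sqrt s + 1) * Real.sqrt t + 4) /
        (3 * Real.sqrt s ^ 5 * t ^ 2) := by
  obtain ⟨a, ha, rfl⟩ : ∃ a : ℝ, 0 < a ∧ a ^ 2 = s :=
    ⟨Real.sqrt s, Real.sqrt_pos.2 hs, Real.sq_sqrt hs.le⟩
  obtain ⟨b, hb, rfl⟩ : ∃ b : ℝ, 0 < b ∧ b ^ 2 = t :=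
    ⟨Real.sqrt t, Real.sqrt_pos.2 ht, Real.sq_sqrt ht.le⟩
  simp only [G, Real.sqrt_sq ha.le, Real.sqrt_sq hb.le]
  set A : ℝ := a ^ 3 * (6 * ((2 * a + 1) * b + 2) - 4 * ((2 * a + 1) * b + 1)) with hA
  set B : ℝ := 2 * (a ^ 2 + 2 * a + 3) * (a * b + 1)
      - 6 * (a ^ 3 * b - 2 * a ^ 2 * (b - 1) - 2 * a + 2) with hB
  set C : ℝ := a ^ 2 * (6 * b + 4) + a * (10 - 4 * b) - 2 * (b + 1)
      + 6 * (2 * a ^ 3 * b + 2 * a * (b - 1) + 2 * a ^ 2 + b + 2) with hC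
  set E : ℝ := 6 * a * b + 2 * 6 + 2 * a + 2 with hE
  have hnum : HasDerivAt (fun u : ℝ => A + u ^ 2 * B - u * a * C + u ^ 3 * E)
      (-(a * C)) 0 := by
    have h := (((hasDerivAt_const (0:ℝ) A).add ((hasDerivAt_pow 2 (0:ℝ)).mul_const B)).sub
      (((hasDerivAt_id (0:ℝ)).mul_const a).mul_const C)).add ((hasDerivAt_pow 3 (0:ℝ)).mul_const E)
    norm_num at h
    exact h
  have h1 : HasDerivAt (fun u : ℝ => 6 * (u - 1) ^ 3) 18 0 := by
    have h := (((hasDerivAt_id (0:ℝ)).sub_const 1).pow 3).const_mul 6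
    norm_num at h
    exact h
  have h2 : HasDerivAt (fun u : ℝ => (u - a ^ 2) ^ 2) (-(2 * a ^ 2)) 0 := by
    have h := ((hasDerivAt_id (0:ℝ)).sub_const (a ^ 2)).pow 2
    norm_num at h
    exact h
  have h3 : HasDerivAt (fun u : ℝ => u - a ^ 2 * b ^ 2) 1 0 :=
    (hasDerivAt_id (0:ℝ)).sub_const (a ^ 2 * b ^ 2)
  have hden := (h1.mul h2).mul h3
  have hD0 : 6 * ((0 : ℝ) - 1) ^ 3 * (0 - a ^ 2) ^ 2 * (0 - a ^ 2 * b ^ 2) ≠ 0 := by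
    have heq : 6 * ((0 : ℝ) - 1) ^ 3 * (0 - a ^ 2) ^ 2 * (0 - a ^ 2 * b ^ 2)
        = 6 * a ^ 4 * (a ^ 2 * b ^ 2) := by ring
    rw [heq]
    exact ne_of_gt (mul_pos (mul_pos (by norm_num) (pow_pos ha 4))
      (mul_pos (pow_pos ha 2) (pow_pos hb 2)))
  have key : HasDerivAt (fun u : ℝ => (A + u ^ 2 * B - u * a * C + u ^ 3 * E) / (6 * (u - 1) ^ 3 * (u - a ^ 2) ^ 2 * (u - a ^ 2 * b ^ 2))) _ 0 := hnum.div hden hD0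
  rw [key.deriv]
  simp only [Pi.mul_apply]
  have ha0 : a ≠ 0 := ha.ne'
  have hb0 : b ≠ 0 := hb.ne'
  rw [hA, hB, hC, hE]
  field_simp
  ring
end

section
/- Let G(u,s,t,m) = { s^{3/2}( m((2√s+1)√t+2) − 4((2√s+1)√t+1) ) + u²( 2(s+2√s+3)(√s·√t+1) − m(s^{3/2}√t − 2s(√t−1) − 2√s + 2) ) − u·√s·[ s(6√t+4) + √s(10−4√t) − 2(√t+1) + m(2s^{3/2}√t + 2√s(√t−1) + 2s + √t + 2) ] + u³( m√s√t + 2m + 2√s + 2 ) } / ( m(u−1)³(u−s)²(u−st) ). Then for all real s > 0 and t > 0, the second partial derivative ∂²G/∂u² evaluated at u = 0 with m = 8 equals [ (4s^{3/2} + 3s + 2√s + 1) t^{3/2} + (2s^{3/2} + 6s² + 5s + √s + 4) t² + (8s + 3√s + 5) t + (4√s + 2)√t + 6 ] / (2 s^{7/2} t³); that is, H⁽⁸⁾_{Δ_k}(s,t) equals this expression. -/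
open Real

section auxQuot

open Polynomial

lemma quot_d2 (p q : Polynomial ℝ) (hq : q.eval 0 ≠ 0) :
    iteratedDeriv 2 (fun u : ℝ => p.eval u / q.eval u) 0 =
      ((p.derivative * q - p * q.derivative).derivative.eval 0 * q.eval 0
        - 2 * ((p.derivative * q - p * q.derivative).eval 0) * q.derivative.eval 0)
        / (q.eval 0) ^ 3 := by
  set r := p.derivative * q - p * q.derivative with hr
  have hU : IsOpen {u : ℝ | q.eval u ≠ 0} :=
    isOpen_compl_singleton.preimage q.continuous
  have hF : ∀ u ∈ {u : ℝ | q.eval u ≠ 0},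
      HasDerivAt (fun u : ℝ => p.eval u / q.eval u) (r.eval u / (q.eval u) ^ 2) u := by
    intro u hu
    have h := (p.hasDerivAt u).div (q.hasDerivAt u) hu
    simp only [hr, Polynomial.eval_sub, Polynomial.eval_mul]
    exact h
  have heq : deriv (fun u : ℝ => p.eval u / q.eval u)
      =ᶠ[nhds (0:ℝ)] fun u => r.eval u / (q.eval u) ^ 2 := by
    filter_upwards [hU.mem_nhds hq] with u hu
    exact (hF u hu).deriv
  have hq2 : (q ^ 2).eval (0:ℝ) ≠ 0 := by
    simpa using pow_ne_zero 2 hq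
  have h2 := (r.hasDerivAt (0:ℝ)).div ((q ^ 2).hasDerivAt (0:ℝ)) hq2
  simp only [Polynomial.eval_pow] at h2
  have h3 : deriv (fun u : ℝ => r.eval u / (q.eval u) ^ 2) 0 =
      (r.derivative.eval 0 * q.eval 0 ^ 2 -
        r.eval 0 * (q ^ 2).derivative.eval 0) / (q.eval 0 ^ 2) ^ 2 := h2.deriv
  rw [show (2:ℕ) = 1 + 1 from rfl, iteratedDeriv_succ, iteratedDeriv_one,
    heq.deriv_eq, h3]
  have : (q ^ 2).derivative.eval (0:ℝ) = 2 * q.eval 0 * q.derivative.eval 0 := by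
    simp [Polynomial.derivative_pow]; try ring
  rw [this]
  field_simp

end auxQuot

/-- Numerator polynomial of `G · s t 8`. -/
noncomputable def pAux (s t : ℝ) : Polynomial ℝ :=
  Polynomial.C (Real.sqrt s ^ 3 * (8 * ((2 * Real.sqrt s + 1) * Real.sqrt t + 2)
      - 4 * ((2 * Real.sqrt s + 1) * Real.sqrt t + 1)))
  + Polynomial.C (-(Real.sqrt s * (s * (6 * Real.sqrt t + 4)
      + Real.sqrt s * (10 - 4 * Real.sqrt t) - 2 * (Real.sqrt t + 1)
      + 8 * (2 * Real.sqrt s ^ 3 * Real.sqrt t + 2 * Real.sqrt s * (Real.sqrt t - 1)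
        + 2 * s + Real.sqrt t + 2)))) * Polynomial.X
  + Polynomial.C (2 * (s + 2 * Real.sqrt s + 3) * (Real.sqrt s * Real.sqrt t + 1)
      - 8 * (Real.sqrt s ^ 3 * Real.sqrt t - 2 * s * (Real.sqrt t - 1)
        - 2 * Real.sqrt s + 2)) * Polynomial.X ^ 2
  + Polynomial.C (8 * Real.sqrt s * Real.sqrt t + 2 * 8 + 2 * Real.sqrt s + 2)
      * Polynomial.X ^ 3

/-- Denominator polynomial of `G · s t 8`. -/
noncomputable def qAux (s t : ℝ) : Polynomial ℝ :=
  Polynomial.C 8 * (Polynomial.X - 1) ^ 3 * (Polynomial.X - Polynomial.C s) ^ 2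
    * (Polynomial.X - Polynomial.C (s * t))

/-- In dimension eight, the two-variable local curvature function of the perturbed
Laplacian is `H⁽⁸⁾_{Δ_k}(s,t) = ∂²G/∂u² (0,s,t,8)`, equal to the displayed explicit
expression. -/
theorem stmt5 (s t : ℝ) (hs : 0 < s) (ht : 0 < t) :
    iteratedDeriv 2 (fun u : ℝ => G u s t 8) 0 =
      ((4 * Real.sqrt s ^ 3 + 3 * s + 2 * Real.sqrt s + 1) * Real.sqrt t ^ 3
        + (2 * Real.sqrt s ^ 3 + 6 * s ^ 2 + 5 * s + Real.sqrt s + 4) * t ^ 2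
        + (8 * s + 3 * Real.sqrt s + 5) * t
        + (4 * Real.sqrt s + 2) * Real.sqrt t + 6) /
      (2 * Real.sqrt s ^ 7 * t ^ 3) := by
  have hfun : (fun u : ℝ => G u s t 8)
      = fun u : ℝ => (pAux s t).eval u / (qAux s t).eval u := by
    funext u
    simp only [G, pAux, qAux, Polynomial.eval_add, Polynomial.eval_mul,
      Polynomial.eval_sub, Polynomial.eval_pow, Polynomial.eval_C,
      Polynomial.eval_X, Polynomial.eval_one, Polynomial.eval_neg]
    ring
  have hq0 : (qAux s t).eval 0 ≠ 0 := by
    have : (qAux s t).eval 0 = 8 * s ^ 3 * t := by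
      simp only [qAux, Polynomial.eval_mul, Polynomial.eval_pow,
        Polynomial.eval_sub, Polynomial.eval_C, Polynomial.eval_X,
        Polynomial.eval_one]
      ring
    rw [this]; positivity
  rw [hfun, quot_d2 _ _ hq0]
  set a := Real.sqrt s with hA
  set b := Real.sqrt t with hB
  have ha : a ^ 2 = s := Real.sq_sqrt hs.le
  have hb : b ^ 2 = t := Real.sq_sqrt ht.le
  have ha0 : 0 < a := Real.sqrt_pos.2 hs
  have hb0 : 0 < b := Real.sqrt_pos.2 ht
  simp only [pAux, qAux, Polynomial.derivative_add, Polynomial.derivative_mul,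
    Polynomial.derivative_sub, Polynomial.derivative_pow, Polynomial.derivative_C,
    Polynomial.derivative_X, Polynomial.derivative_one, Polynomial.eval_add,
    Polynomial.eval_mul, Polynomial.eval_sub, Polynomial.eval_pow,
    Polynomial.eval_C, Polynomial.eval_X, Polynomial.eval_one,
    Polynomial.eval_neg, Polynomial.eval_natCast, Polynomial.eval_zero, Polynomial.derivative_zero]
  rw [← ha, ← hb]
  simp only [Real.sqrt_sq ha0.le, Real.sqrt_sq hb0.le]
  have ha' : a ≠ 0 := ha0.ne'
  have hb' : b ≠ 0 := hb0.ne'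
  field_simp
  ring
end

section
/- Let f₁(s) = (e^s − 1)/s for s ≠ 0 and g₂(s,t) = (s e^{s+t} − e^s(s+t) + t)/(s t (s+t)). Then for all real u, v with u ≠ 0, v ≠ 0 and u + v ≠ 0, e^{u/4} e^{v/4} [ e^{u/2} · e^{−3u/2} e^{−v} · f₁(u/2) f₁(v/2) + 2 g₂(u/2, v/2) · (−e^{−(u+v)}/2) ] = 4 e^{−3(u+v)/4} ( −u e^{v/2} + (e^{u/2} − 1) e^{v/2} v + u ) / (u v (u+v)). In other words, the two-variable modular curvature function in dimension four, ℋ⁽⁴⁾_{D_h}(u,v) = e^{u/4} e^{v/4}( e^{u/2} H⁽⁴⁾_{Δ_k}(e^u,e^v) f₁(u/2) f₁(v/2) + 2 g₂(u/2,v/2) K⁽⁴⁾_{Δ_k}(e^{u+v}) ) with H⁽⁴⁾_{Δ_k}(s,t) = s^{−3/2} t^{−1} and K⁽⁴⁾_{Δ_k}(s) = −1/(2s), has the stated closed form. -/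
open Real

/-- `f₁(s) = (e^s − 1)/s`, the reciprocal of the generating function of the
Bernoulli numbers. -/
noncomputable def f₁ (s : ℝ) : ℝ := (Real.exp s - 1) / s

/-- `g₂(s,t) = (s e^{s+t} − e^s(s+t) + t)/(s t (s+t))`. -/
noncomputable def g₂ (s t : ℝ) : ℝ :=
  (s * Real.exp (s + t) - Real.exp s * (s + t) + t) / (s * t * (s + t))

/-- The two-variable modular curvature function in dimension four,
`ℋ⁽⁴⁾_{D_h}(u,v) = e^{u/4} e^{v/4}( e^{u/2} H⁽⁴⁾_{Δ_k}(e^u,e^v) f₁(u/2) f₁(v/2)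
  + 2 g₂(u/2,v/2) K⁽⁴⁾_{Δ_k}(e^{u+v}) )`
with `H⁽⁴⁾_{Δ_k}(s,t) = s^{−3/2} t^{−1}` (so `H⁽⁴⁾_{Δ_k}(e^u,e^v) = e^{−3u/2} e^{−v}`)
and `K⁽⁴⁾_{Δ_k}(s) = −1/(2s)` (so `K⁽⁴⁾_{Δ_k}(e^{u+v}) = −e^{−(u+v)}/2`),
has the closed form
`4 e^{−3(u+v)/4}( −u e^{v/2} + (e^{u/2} − 1) e^{v/2} v + u )/(u v (u+v))`. -/
theorem stmt7 (u v : ℝ) (hu : u ≠ 0) (hv : v ≠ 0) (huv : u + v ≠ 0) :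
    Real.exp (u / 4) * Real.exp (v / 4) *
      (Real.exp (u / 2) * (Real.exp (-3 * u / 2) * Real.exp (-v)) *
          f₁ (u / 2) * f₁ (v / 2)
        + 2 * g₂ (u / 2) (v / 2) * (-Real.exp (-(u + v)) / 2)) =
      4 * Real.exp (-3 * (u + v) / 4) *
        (-u * Real.exp (v / 2) + (Real.exp (u / 2) - 1) * Real.exp (v / 2) * v + u) /
        (u * v * (u + v)) := by
  unfold f₁ g₂
  set x := Real.exp (u / 4) with hx
  set y := Real.exp (v / 4) with hy
  have hx0 : 0 < x := Real.exp_pos _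
  have hy0 : 0 < y := Real.exp_pos _
  have e1 : Real.exp (u / 2) = x ^ 2 := by
    rw [hx, ← Real.exp_nat_mul]; congr 1; push_cast; ring
  have e2 : Real.exp (v / 2) = y ^ 2 := by
    rw [hy, ← Real.exp_nat_mul]; congr 1; push_cast; ring
  have e3 : Real.exp (-3 * u / 2) = (x ^ 6)⁻¹ := by
    rw [hx, ← Real.exp_nat_mul, ← Real.exp_neg]; congr 1; push_cast; ring
  have e4 : Real.exp (-v) = (y ^ 4)⁻¹ := by
    rw [hy, ← Real.exp_nat_mul, ← Real.exp_neg]; congr 1; push_cast; ring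
  have e5 : Real.exp (u / 2 + v / 2) = x ^ 2 * y ^ 2 := by
    rw [Real.exp_add, e1, e2]
  have e6 : Real.exp (-(u + v)) = (x ^ 4 * y ^ 4)⁻¹ := by
    rw [hx, hy, ← Real.exp_nat_mul, ← Real.exp_nat_mul, ← Real.exp_add, ← Real.exp_neg]
    congr 1; push_cast; ring
  have e7 : Real.exp (-3 * (u + v) / 4) = (x ^ 3 * y ^ 3)⁻¹ := by
    rw [hx, hy, ← Real.exp_nat_mul, ← Real.exp_nat_mul, ← Real.exp_add, ← Real.exp_neg]
    congr 1; push_cast; ring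
  rw [e1, e2, e3, e4, e5, e6, e7]
  have h2 : u / 2 ≠ 0 := by positivity
  have h3 : v / 2 ≠ 0 := by positivity
  have h4 : u / 2 + v / 2 ≠ 0 := by
    intro h; apply huv; linarith
  field_simp
  ring
end

section
/- For every real u ≠ 0, (−2u − 4e^{−u/2} + 4)/u² − e^{−u}( −(2u − 4e^{u/2} + 4)/u² − (e^u − 1)/u ) − (e^{−u} − 1)/u = 4 e^{−u} (e^{u/2} − 1)² / u². Hence in dimension four the expression T(u) + T(−u)e^{−u} built from T(u) = 2𝒦⁽⁴⁾_{D_h}(0) f₁(−u) + ℋ⁽⁴⁾_{D_h}(u,−u) coincides with the Einstein–Hilbert curvature function −8(e^{−3u/4} − e^{−u/4}) sinh(u/4)/u², verifying the internal functional relation between the one- and two-variable modular curvature functions in dimension four. -/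
open Real

/-- The internal functional relation in dimension four: the expression
`T(u) + T(−u)e^{−u}` built from
`T(u) = 2𝒦⁽⁴⁾_{D_h}(0) f₁(−u) + ℋ⁽⁴⁾_{D_h}(u,−u)` simplifies to
`4 e^{−u} (e^{u/2} − 1)² / u²`, which is the Einstein–Hilbert curvature function
`−8(e^{−3u/4} − e^{−u/4}) sinh(u/4)/u²`. -/
theorem stmt10 (u : ℝ) (hu : u ≠ 0) :
    (-2 * u - 4 * Real.exp (-u / 2) + 4) / u ^ 2
      - Real.exp (-u) *
          (-((2 * u - 4 * Real.exp (u / 2) + 4) / u ^ 2) - (Real.exp u - 1) / u)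
      - (Real.exp (-u) - 1) / u =
      4 * Real.exp (-u) * (Real.exp (u / 2) - 1) ^ 2 / u ^ 2 := by
  have hb : Real.exp (-u/2) = (Real.exp (u/2))⁻¹ := by
    rw [← Real.exp_neg]; ring_nf
  have h1 : Real.exp (-u) = ((Real.exp (u/2))⁻¹) ^ 2 := by
    rw [← Real.exp_neg, ← Real.exp_nat_mul]; ring_nf
  have h2 : Real.exp u = (Real.exp (u/2)) ^ 2 := by
    rw [← Real.exp_nat_mul]; ring_nf
  have hne := Real.exp_ne_zero (u/2)
  rw [h1, h2, show (-u/2 : ℝ) = -(u/2) by ring, Real.exp_neg]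
  field_simp
  ring
end

section
/- Let A be a complete normed algebra over ℝ (or ℂ) and let a, b ∈ A. Then the map t ↦ exp(a + t·b) from ℝ to A is differentiable at t = 0 with derivative ∫₀¹ exp(s·a) · b · exp((1−s)·a) ds (Duhamel's formula). This is the variation formula underlying the computation of the gradient of the Einstein–Hilbert action, where the Einstein–Hilbert functional is differentiated along a self-adjoint direction in the log-Weyl factor. -/
open MeasureTheory

open NormedSpace intervalIntegral in
private lemma duhamel_cont' {A : Type*} [NormedRing A] [NormedAlgebra ℝ A] [CompleteSpace A]
    (x y : A) :
    Continuous fun s : ℝ => exp (s • x) * (x - y) * exp ((1 - s) • y) := by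
  have hc1 : Continuous fun s : ℝ => exp (s • x) :=
    (letI : NormedAlgebra ℚ A := .restrictScalars ℚ ℝ A; exp_continuous).comp (continuous_id.smul continuous_const)
  have hc2 : Continuous fun s : ℝ => exp ((1 - s) • y) :=
    (letI : NormedAlgebra ℚ A := .restrictScalars ℚ ℝ A; exp_continuous).comp ((continuous_const.sub continuous_id).smul continuous_const)
  exact (hc1.mul continuous_const).mul hc2

open NormedSpace intervalIntegral in
private lemma duhamel_key' {A : Type*} [NormedRing A] [NormedAlgebra ℝ A] [CompleteSpace A]
    (x y : A) :
    exp x - exp y =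
      ∫ s in (0:ℝ)..1, exp (s • x) * (x - y) * exp ((1 - s) • y) := by
  have hderiv : ∀ s ∈ Set.uIcc (0:ℝ) 1,
      HasDerivAt (fun s : ℝ => exp (s • x) * exp ((1 - s) • y))
        (exp (s • x) * (x - y) * exp ((1 - s) • y)) s := by
    intro s _
    have h1 : HasDerivAt (fun s : ℝ => exp (s • x)) (exp (s • x) * x) s :=
      hasDerivAt_exp_smul_const x s
    have hin : HasDerivAt (fun s : ℝ => 1 - s) (-1) s := by
      simpa using (hasDerivAt_id s).const_sub 1
    have h2 : HasDerivAt (fun s : ℝ => exp ((1 - s) • y))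
        ((-1 : ℝ) • (y * exp ((1 - s) • y))) s :=
      (hasDerivAt_exp_smul_const' y (1 - s)).scomp s hin
    have := h1.mul h2
    convert this using 1
    · rfl
    simp only [neg_one_smul, mul_neg]
    noncomm_ring
  have := integral_eq_sub_of_hasDerivAt hderiv
    ((duhamel_cont' x y).intervalIntegrable 0 1)
  rw [this]
  simp [exp_zero]

open NormedSpace in
/-- Duhamel's formula: in a complete normed algebra `A` over `ℝ`, for `a b : A`,
the map `t ↦ exp(a + t·b)` is differentiable at `t = 0` with derivative
`∫₀¹ exp(s·a) · b · exp((1−s)·a) ds`. -/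
theorem stmt17 {A : Type*} [NormedRing A] [NormedAlgebra ℝ A] [CompleteSpace A]
    (a b : A) :
    HasDerivAt (fun t : ℝ => NormedSpace.exp (a + t • b))
      (∫ s in (0 : ℝ)..1,
        NormedSpace.exp (s • a) * b * NormedSpace.exp ((1 - s) • a))
      0 := by
  set I : ℝ → A := fun t =>
    ∫ s in (0:ℝ)..1, exp (s • (a + t • b)) * b * exp ((1 - s) • a) with hI
  have hI0 : I 0 = ∫ s in (0:ℝ)..1, exp (s • a) * b * exp ((1 - s) • a) := by
    simp [hI]
  rw [← hI0]
  -- Step A: the exact identity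
  have stepA : ∀ t : ℝ, exp (a + t • b) - exp a = t • I t := by
    intro t
    have h := duhamel_key' (a + t • b) a
    have h2 : (fun s : ℝ => exp (s • (a + t • b)) * (a + t • b - a) * exp ((1 - s) • a))
        = fun s : ℝ => t • (exp (s • (a + t • b)) * b * exp ((1 - s) • a)) := by
      funext s
      rw [add_sub_cancel_left]
      rw [mul_smul_comm, smul_mul_assoc]
    rw [h, h2, intervalIntegral.integral_smul]
  -- continuity of the two-variable integrand
  have hcont2 : Continuous fun p : ℝ × ℝ =>
      exp (p.2 • (a + p.1 • b)) * b * exp ((1 - p.2) • a) := by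
    have hc1 : Continuous fun p : ℝ × ℝ => exp (p.2 • (a + p.1 • b)) :=
      (letI : NormedAlgebra ℚ A := .restrictScalars ℚ ℝ A; exp_continuous).comp (continuous_snd.smul (continuous_const.add
        (continuous_fst.smul continuous_const)))
    have hc2 : Continuous fun p : ℝ × ℝ => exp ((1 - p.2) • a) :=
      (letI : NormedAlgebra ℚ A := .restrictScalars ℚ ℝ A; exp_continuous).comp ((continuous_const.sub continuous_snd).smul continuous_const)
    exact (hc1.mul continuous_const).mul hc2
  -- Step B: continuity of I at 0
  have stepB : Filter.Tendsto I (nhds 0) (nhds (I 0)) := by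
    obtain ⟨C, hC⟩ : ∃ C, ∀ p ∈ (Set.Icc (-1:ℝ) 1 ×ˢ Set.Icc (0:ℝ) 1),
        ‖exp (p.2 • (a + p.1 • b)) * b * exp ((1 - p.2) • a)‖ ≤ C :=
      ((isCompact_Icc.prod isCompact_Icc)).exists_bound_of_continuousOn hcont2.continuousOn
    apply intervalIntegral.tendsto_integral_filter_of_dominated_convergence (fun _ => C)
    · filter_upwards with t
      exact (Continuous.aestronglyMeasurable (by
        have := hcont2.comp (Continuous.prodMk_right t)
        exact this))
    · filter_upwards [(Icc_mem_nhds (by norm_num) (by norm_num) :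
        Set.Icc (-1:ℝ) 1 ∈ nhds 0)] with t ht
      filter_upwards with s hs
      have hs' : s ∈ Set.Icc (0:ℝ) 1 := by
        rw [Set.uIoc_of_le (by norm_num : (0:ℝ) ≤ 1)] at hs
        exact ⟨le_of_lt hs.1, hs.2⟩
      exact hC (t, s) ⟨ht, hs'⟩
    · exact intervalIntegrable_const
    · filter_upwards with s _
      exact ((hcont2.comp (continuous_id.prodMk continuous_const)).tendsto 0)
  -- conclude
  rw [hasDerivAt_iff_tendsto_slope]
  have heq : ∀ᶠ t in nhdsWithin 0 {(0:ℝ)}ᶜ,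
      I t = slope (fun t : ℝ => exp (a + t • b)) 0 t := by
    filter_upwards [self_mem_nhdsWithin] with t ht
    have ht' : t ≠ 0 := ht
    rw [slope_def_module, sub_zero]
    simp only [zero_smul, add_zero]
    rw [stepA t, smul_smul, inv_mul_cancel₀ ht', one_smul]
  exact Filter.Tendsto.congr' heq (stepB.mono_left nhdsWithin_le_nhds)
end

section
/- Let A be a complete normed algebra over ℝ (or ℂ), let δ : A → A be a continuous derivation (δ(xy) = δ(x)y + xδ(y)), and let h ∈ A. Define ad_h : A → A by ad_h(x) = hx − xh. Then δ(exp h) = exp(h) · Σ_{n=0}^∞ (−ad_h)^n (δh) / (n+1)!. Equivalently, δ(exp h) = exp(h) · f₁(−ad_h)(δh) where f₁(z) = (e^z − 1)/z, i.e. the chain rule ∇e^h = e^h · ((e^{ad_{−h}} − 1)/ad_{−h})(∇h) holds. -/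
open Finset

/-- Key combinatorial identity for commuting elements. -/
private lemma key_comm {R : Type*} [Ring R] {a b : R} (hc : Commute a b) (N : ℕ) :
    ∑ p ∈ range (N + 1), (N + 1).choose p • (a ^ p * (b - a) ^ (N - p))
      = ∑ p ∈ range (N + 1), a ^ p * b ^ (N - p) := by
  induction N with
  | zero => simp
  | succ N ih =>
    have hca : Commute a (b - a) := hc.sub_right (Commute.refl a)
    have hbin : b ^ (N + 1)
        = ∑ q ∈ range (N + 2), (N + 1).choose q • (a ^ q * (b - a) ^ (N + 1 - q)) := by
      have hpow := hca.add_pow (N + 1)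
      have hab : a + (b - a) = b := by abel
      rw [hab] at hpow
      rw [hpow]
      refine Finset.sum_congr rfl fun q _ => ?_
      rw [nsmul_eq_mul, (Nat.cast_commute ((N+1).choose q) _).eq, mul_assoc]
    rw [Finset.sum_range_succ' (fun p => (N + 2).choose p • (a ^ p * (b - a) ^ (N + 1 - p))),
      Finset.sum_range_succ' (fun p => a ^ p * b ^ (N + 1 - p))]
    have e1 : ∀ p ∈ range (N + 1),
        (N + 2).choose (p + 1) • (a ^ (p + 1) * (b - a) ^ (N + 1 - (p + 1)))
          = (N + 1).choose p • (a ^ (p + 1) * (b - a) ^ (N - p))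
            + (N + 1).choose (p + 1) • (a ^ (p + 1) * (b - a) ^ (N + 1 - (p + 1))) := by
      intro p _
      rw [Nat.choose_succ_succ (N + 1) p, add_smul, Nat.succ_sub_succ]
    rw [Finset.sum_congr rfl e1, Finset.sum_add_distrib]
    have e2 : ∑ p ∈ range (N + 1), (N + 1).choose p • (a ^ (p + 1) * (b - a) ^ (N - p))
        = a * ∑ p ∈ range (N + 1), a ^ p * b ^ (N - p) := by
      rw [← ih, Finset.mul_sum]
      refine Finset.sum_congr rfl fun p _ => ?_
      rw [mul_smul_comm, pow_succ', mul_assoc]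
    have e3 : (∑ p ∈ range (N + 1),
          (N + 1).choose (p + 1) • (a ^ (p + 1) * (b - a) ^ (N + 1 - (p + 1))))
          + (N + 2).choose 0 • (a ^ 0 * (b - a) ^ (N + 1 - 0)) = b ^ (N + 1) := by
      rw [hbin, Finset.sum_range_succ' (fun q => (N + 1).choose q • (a ^ q * (b - a) ^ (N + 1 - q)))]
      simp
    have e4 : ∑ p ∈ range (N + 1), a ^ (p + 1) * b ^ (N + 1 - (p + 1))
        = a * ∑ p ∈ range (N + 1), a ^ p * b ^ (N - p) := by
      rw [Finset.mul_sum]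
      refine Finset.sum_congr rfl fun p _ => ?_
      rw [Nat.succ_sub_succ, pow_succ', mul_assoc]
    rw [add_assoc, e2, e3, e4]
    simp

private lemma iterate_eq_pow {A : Type*} [NormedRing A] [NormedAlgebra ℝ A] (h : A) (m : ℕ)
    (y : A) : (fun x : A => x * h - h * x)^[m] y
      = ((LinearMap.mulRight ℝ h - LinearMap.mulLeft ℝ h) ^ m) y := by
  induction m with
  | zero => simp
  | succ m ih =>
    rw [Function.iterate_succ_apply', ih, pow_succ', Module.End.mul_apply]
    simp

private lemma pow_apply_norm_le {A : Type*} [NormedRing A] [NormedAlgebra ℝ A] (h : A) (m : ℕ)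
    (y : A) : ‖((LinearMap.mulRight ℝ h - LinearMap.mulLeft ℝ h) ^ m) y‖
      ≤ (2 * ‖h‖) ^ m * ‖y‖ := by
  induction m with
  | zero => simp
  | succ m ih =>
    rw [pow_succ', Module.End.mul_apply]
    set z := ((LinearMap.mulRight ℝ h - LinearMap.mulLeft ℝ h) ^ m) y with hz
    calc ‖(LinearMap.mulRight ℝ h - LinearMap.mulLeft ℝ h) z‖
        = ‖z * h - h * z‖ := by simp
      _ ≤ ‖z * h‖ + ‖h * z‖ := norm_sub_le _ _
      _ ≤ ‖z‖ * ‖h‖ + ‖h‖ * ‖z‖ := add_le_add (norm_mul_le _ _) (norm_mul_le _ _)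
      _ = 2 * ‖h‖ * ‖z‖ := by ring
      _ ≤ 2 * ‖h‖ * ((2 * ‖h‖) ^ m * ‖y‖) := by
          apply mul_le_mul_of_nonneg_left ih
          positivity
      _ = (2 * ‖h‖) ^ (m + 1) * ‖y‖ := by ring

/-- Noncommutative chain rule: in a complete normed algebra `A` over `ℝ`, for a
continuous derivation `δ : A → A` and `h ∈ A`, with `ad_h(x) = hx − xh`,
`δ(exp h) = exp(h) · Σ_{n=0}^∞ (−ad_h)^n (δh)/(n+1)!`, i.e.
`δ(exp h) = exp(h) · f₁(−ad_h)(δh)` with `f₁(z) = (e^z − 1)/z`. -/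
theorem stmt18 {A : Type*} [NormedRing A] [NormedAlgebra ℝ A] [CompleteSpace A]
    (δ : A →L[ℝ] A) (hδ : ∀ x y : A, δ (x * y) = δ x * y + x * δ y) (h : A) :
    δ (NormedSpace.exp h) =
      NormedSpace.exp h *
        ∑' n : ℕ,
          (((n + 1).factorial : ℝ))⁻¹ • ((fun x : A => x * h - h * x)^[n] (δ h)) := by
  classical
  set y : A := δ h with hy
  set D : Module.End ℝ A := LinearMap.mulRight ℝ h - LinearMap.mulLeft ℝ h with hDdef
  -- the derivation kills 1
  have hδ1 : δ (1 : A) = 0 := by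
    have h1 := hδ 1 1
    rw [mul_one, one_mul, mul_one] at h1
    have := add_eq_left.mp h1.symm
    exact this
  -- Leibniz rule for powers
  have hpow : ∀ n : ℕ, δ (h ^ (n + 1)) = ∑ k ∈ range (n + 1), h ^ k * y * h ^ (n - k) := by
    intro n
    induction n with
    | zero => simp [hy]
    | succ n ih =>
      rw [pow_succ' h (n + 1), hδ, ih, Finset.mul_sum,
        Finset.sum_range_succ' (fun k => h ^ k * y * h ^ (n + 1 - k)), add_comm]
      congr 1
      · refine Finset.sum_congr rfl fun k _ => ?_
        simp only [Nat.succ_sub_succ, pow_succ', mul_assoc]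
      · simp [hy]
  -- summability facts
  have hf_norm : Summable fun n : ℕ => ‖((n.factorial : ℝ))⁻¹ • h ^ n‖ :=
    NormedSpace.norm_expSeries_summable' (𝕂 := ℝ) h
  have hg_norm : Summable fun n : ℕ => ‖((n + 1).factorial : ℝ)⁻¹ • (D ^ n) y‖ := by
    refine Summable.of_nonneg_of_le (fun n => norm_nonneg _) (fun n => ?_)
      ((Real.summable_pow_div_factorial (2 * ‖h‖)).mul_right ‖y‖)
    rw [norm_smul, Real.norm_eq_abs, abs_inv, abs_of_nonneg (by positivity)]
    calc ((n + 1).factorial : ℝ)⁻¹ * ‖(D ^ n) y‖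
        ≤ ((n.factorial : ℝ))⁻¹ * ((2 * ‖h‖) ^ n * ‖y‖) := by
          apply mul_le_mul _ (pow_apply_norm_le h n y) (norm_nonneg _) (by positivity)
          apply inv_anti₀ (by positivity)
          exact_mod_cast Nat.factorial_le (Nat.le_succ n)
      _ = (2 * ‖h‖) ^ n / n.factorial * ‖y‖ := by
          field_simp
  -- rewrite left-hand side
  have hLHS : δ (NormedSpace.exp h)
      = ∑' N : ℕ, ((N + 1).factorial : ℝ)⁻¹ • ∑ k ∈ range (N + 1), h ^ k * y * h ^ (N - k) := by
    rw [NormedSpace.exp_eq_tsum (𝕂 := ℝ)]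
    rw [δ.map_tsum hf_norm.of_norm]
    have hstep : ∀ n : ℕ, δ (((n.factorial : ℝ))⁻¹ • h ^ n) = ((n.factorial : ℝ))⁻¹ • δ (h ^ n) :=
      fun n => δ.map_smul _ _
    rw [tsum_congr hstep]
    have hsum' : Summable fun n : ℕ => ((n.factorial : ℝ))⁻¹ • δ (h ^ n) := by
      have hmap := (hf_norm.of_norm).map (δ : A →L[ℝ] A) δ.continuous
      exact hmap.congr fun n => hstep n
    rw [Summable.tsum_eq_zero_add hsum']
    simp only [Nat.factorial_zero, Nat.cast_one, inv_one, pow_zero, hδ1, smul_zero, zero_add]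
    exact tsum_congr fun N => by rw [hpow N]
  -- rewrite right-hand side via the Cauchy product
  have hIter : (∑' n : ℕ, ((n + 1).factorial : ℝ)⁻¹ • ((fun x : A => x * h - h * x)^[n] y))
      = ∑' n : ℕ, ((n + 1).factorial : ℝ)⁻¹ • (D ^ n) y :=
    tsum_congr fun n => by rw [iterate_eq_pow]
  rw [hLHS, hIter, NormedSpace.exp_eq_tsum (𝕂 := ℝ),
    tsum_mul_tsum_eq_tsum_sum_range_of_summable_norm hf_norm hg_norm]
  -- termwise identity
  refine tsum_congr fun N => ?_
  -- operator identity from `key_comm`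
  have hcomm : Commute (LinearMap.mulLeft ℝ h) (LinearMap.mulRight ℝ h) := by
    apply LinearMap.ext
    intro x
    simp [Module.End.mul_apply, mul_assoc]
  have hE := key_comm hcomm N
  have hEy := DFunLike.congr_fun hE y
  simp only [LinearMap.coe_sum, Finset.sum_apply, LinearMap.smul_apply] at hEy
  simp only [Module.End.mul_apply, LinearMap.pow_mulLeft, LinearMap.pow_mulRight,
    LinearMap.mulLeft_apply, LinearMap.mulRight_apply, ← mul_assoc, ← hDdef] at hEy
  rw [← hEy, Finset.smul_sum]
  refine Finset.sum_congr rfl fun k hk => ?_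
  have hkN : k ≤ N := Nat.lt_succ_iff.mp (Finset.mem_range.mp hk)
  rw [smul_mul_smul_comm, ← Nat.cast_smul_eq_nsmul ℝ ((N + 1).choose k), smul_smul]
  congr 1
  have hfact : ((N + 1).factorial : ℝ)
      = ((N + 1).choose k : ℝ) * (k.factorial : ℝ) * (((N - k) + 1).factorial : ℝ) := by
    have h1 : N + 1 - k = (N - k) + 1 := by omega
    have h2 := Nat.choose_mul_factorial_mul_factorial (Nat.le_succ_of_le hkN)
    rw [h1] at h2
    exact_mod_cast h2.symm
  have hk0 : (k.factorial : ℝ) ≠ 0 := Nat.cast_ne_zero.mpr k.factorial_ne_zero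
  have hm0 : (((N - k) + 1).factorial : ℝ) ≠ 0 := Nat.cast_ne_zero.mpr (Nat.factorial_ne_zero _)
  have hc0 : ((N + 1).choose k : ℝ) ≠ 0 :=
    Nat.cast_ne_zero.mpr (Nat.choose_pos (Nat.le_succ_of_le hkN)).ne'
  rw [hfact]
  field_simp
end

section
/- Let A be a complete normed algebra over ℝ (or ℂ), let δ : A → A be a continuous derivation, and let h ∈ A. Then δ(exp h) = ∫₀¹ exp(s·h) · δ(h) · exp((1−s)·h) ds, the integral form of the first-order variation of the exponential used to differentiate the Weyl factor k = e^h. -/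
open MeasureTheory

/-- Integral form of the first-order variation of the exponential: in a complete
normed algebra `A` over `ℝ`, for a continuous derivation `δ : A → A` and `h ∈ A`,
`δ(exp h) = ∫₀¹ exp(s·h) · δ(h) · exp((1−s)·h) ds`. -/
theorem stmt19 {A : Type*} [NormedRing A] [NormedAlgebra ℝ A] [CompleteSpace A]
    (δ : A →L[ℝ] A) (hδ : ∀ x y : A, δ (x * y) = δ x * y + x * δ y) (h : A) :
    δ (NormedSpace.exp h) =
      ∫ s in (0 : ℝ)..1,
        NormedSpace.exp (s • h) * δ h * NormedSpace.exp ((1 - s) • h) := by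
  have hδ1 : δ (1 : A) = 0 := by
    have := hδ 1 1
    simp only [mul_one, one_mul] at this
    have h2 : δ (1 : A) = δ 1 + δ 1 := this
    exact left_eq_add.mp h2
  set f : ℝ → A := fun s => NormedSpace.exp (s • h) *
      δ (NormedSpace.exp ((1 - s) • h)) with hf
  set g : ℝ → A := fun s =>
      NormedSpace.exp (s • h) * δ h * NormedSpace.exp ((1 - s) • h) with hg
  have hderiv : ∀ s : ℝ, HasDerivAt f (-(g s)) s := by
    intro s
    have h1 : HasDerivAt (fun t : ℝ => NormedSpace.exp (t • h))
        (NormedSpace.exp (s • h) * h) s := hasDerivAt_exp_smul_const h s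
    have h2 : HasDerivAt (fun t : ℝ => NormedSpace.exp ((1 - t) • h))
        (-(h * NormedSpace.exp ((1 - s) • h))) s := by
      have hc : HasDerivAt (fun t : ℝ => 1 - t) (-1) s := by
        simpa using (hasDerivAt_id s).const_sub 1
      have := HasDerivAt.scomp_of_eq s
        (hasDerivAt_exp_smul_const' (𝕂 := ℝ) h (1 - s)) hc rfl
      simpa [Function.comp_def, neg_one_smul] using this
    have h3 : HasDerivAt (fun t : ℝ => δ (NormedSpace.exp ((1 - t) • h)))
        (δ (-(h * NormedSpace.exp ((1 - s) • h)))) s :=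
      δ.hasFDerivAt.comp_hasDerivAt s h2
    have h4 := h1.mul h3
    have hcomm : h * NormedSpace.exp (s • h) = NormedSpace.exp (s • h) * h :=
      (((Commute.refl h).smul_right s).exp_right).eq
    convert h4 using 1
    · rfl
    rw [map_neg, hδ]
    simp only [hg]
    rw [mul_neg, mul_add]
    rw [← mul_assoc, ← mul_assoc]
    rw [← hcomm]
    ring_nf
    abel
  have hcont : Continuous g := by
    apply Continuous.mul
    apply Continuous.mul
    · exact (continuous_iff_continuousAt.2 fun x => (NormedSpace.exp_analytic (𝕂 := ℝ) x).continuousAt).comp (continuous_id.smul continuous_const)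
    · exact continuous_const
    · exact (continuous_iff_continuousAt.2 fun x => (NormedSpace.exp_analytic (𝕂 := ℝ) x).continuousAt).comp ((continuous_const.sub continuous_id).smul continuous_const)
  have key := intervalIntegral.integral_eq_sub_of_hasDerivAt
      (f := f) (f' := fun s => -(g s)) (a := 0) (b := 1)
      (fun t _ => hderiv t) ((hcont.neg).intervalIntegrable 0 1)
  rw [intervalIntegral.integral_neg] at key
  have hf1 : f 1 = 0 := by simp [hf, NormedSpace.exp_zero, hδ1]
  have hf0 : f 0 = δ (NormedSpace.exp h) := by
    simp [hf, NormedSpace.exp_zero]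
  rw [hf1, hf0, zero_sub, neg_inj] at key
  exact key.symm
end
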